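/- arXiv:2605.18867 — 2 statements merged into one kernel-verified Lean document; each statement's English description precedes it below -/
import Mathlib

section
/- Let g = A·e_s + g_m in R^n with e_s a unit vector, g_m ⊥ e_s, z ~ N(0, I_n), ξ independent of z with mean 0, and ĝ = (⟨g, z⟩ + ξ)·z. Then for any unit vector v orthogonal to e_s, Var(⟨v, ĝ⟩) ≥ A². -/
/-!
Write `a = ⟨e_s, z⟩`, `b = ⟨v, z⟩`, `c = ⟨g_m, z⟩`, so that `⟨v, ĝ⟩ = A·ab + R` with
`R = (c + ξ) b`. The coordinate `a` is uncorrelated with the projection `z - a e_s`, so joint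
Gaussianity makes them independent, and `b`, `c` are functions of that projection because
`v, g_m ⊥ e_s`. Together with `ξ` centred and independent of `z` this gives
`Var (ab) = E a² · E b² = 1` and `Cov (ab, R) = E a · E [b²c] + E [ab²] · E ξ = 0`, hence
`Var ⟨v, ĝ⟩ = A² + Var R ≥ A²`. The Gaussian facts come from Mathlib's `stdGaussian` on
`EuclideanSpace ℝ (Fin n)`, the law of `toLp 2 ∘ z`.
-/

open MeasureTheory ProbabilityTheory

noncomputable def stdGaussianPi (n : ℕ) : Measure (Fin n → ℝ) :=
  Measure.pi fun _ => gaussianReal 0 1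

noncomputable def dot {n : ℕ} (x y : Fin n → ℝ) : ℝ := ∑ i, x i * y i

open scoped RealInnerProductSpace ENNReal

instance ENNReal.holderTriple_four_four_two : ENNReal.HolderTriple 4 4 2 :=
  ⟨by rw [show (4 : ℝ≥0∞) = 2 * 2 by norm_num, ENNReal.mul_inv (by simp) (by simp), ← mul_two,
    mul_assoc, ENNReal.inv_mul_cancel (by simp) (by simp), mul_one]⟩

section Variance

variable {Ω : Type*} [MeasurableSpace Ω] {P : Measure Ω}

lemma ProbabilityTheory.IndepFun.memLp_two_mul {X Y : Ω → ℝ} (h : IndepFun X Y P)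
    (hX : MemLp X 2 P) (hY : MemLp Y 2 P) : MemLp (fun ω => X ω * Y ω) 2 P := by
  refine (memLp_two_iff_integrable_sq (hX.aestronglyMeasurable.mul hY.aestronglyMeasurable)).2 ?_
  have hsq : IndepFun (fun ω => X ω ^ 2) (fun ω => Y ω ^ 2) P :=
    h.comp (measurable_id.pow_const 2) (measurable_id.pow_const 2)
  simpa only [Pi.mul_def, mul_pow] using hsq.integrable_mul hX.integrable_sq hY.integrable_sq

lemma ProbabilityTheory.IndepFun.variance_mul [IsProbabilityMeasure P] {X Y : Ω → ℝ}
    (h : IndepFun X Y P) (hX : MemLp X 2 P) (hY : MemLp Y 2 P) :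
    Var[fun ω => X ω * Y ω; P] =
      (∫ ω, X ω ^ 2 ∂P) * (∫ ω, Y ω ^ 2 ∂P) - (∫ ω, X ω ∂P) ^ 2 * (∫ ω, Y ω ∂P) ^ 2 := by
  have hsq : IndepFun (fun ω => X ω ^ 2) (fun ω => Y ω ^ 2) P :=
    h.comp (measurable_id.pow_const 2) (measurable_id.pow_const 2)
  rw [variance_eq_sub (h.memLp_two_mul hX hY)]
  simp only [Pi.pow_apply, mul_pow, hsq.integral_fun_mul_eq_mul_integral
    (hX.aestronglyMeasurable.pow 2) (hY.aestronglyMeasurable.pow 2),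
    h.integral_fun_mul_eq_mul_integral hX.aestronglyMeasurable hY.aestronglyMeasurable]

lemma sq_le_variance_const_mul_add [IsFiniteMeasure P] (A : ℝ) {W R : Ω → ℝ}
    (hW : MemLp W 2 P) (hR : MemLp R 2 P) (hVar : Var[W; P] = 1) (hcov : cov[W, R; P] = 0) :
    A ^ 2 ≤ Var[fun ω => A * W ω + R ω; P] := by
  rw [variance_fun_add (hW.const_mul A) hR, variance_const_mul, covariance_const_mul_left, hVar,
    hcov]
  linarith [variance_nonneg R P]

lemma sq_le_variance_mul_of_indepFun [IsProbabilityMeasure P] (A : ℝ) {a b c ξ : Ω → ℝ}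
    (habc : IndepFun a (fun ω => (b ω, c ω)) P) (habξ : IndepFun (fun ω => (a ω, b ω)) ξ P)
    (ha : MemLp a 4 P) (hb : MemLp b 4 P) (hc : MemLp c 4 P) (hξ : MemLp ξ 2 P)
    (ha0 : ∫ ω, a ω ∂P = 0) (hξ0 : ∫ ω, ξ ω ∂P = 0)
    (ha2 : ∫ ω, a ω ^ 2 ∂P = 1) (hb2 : ∫ ω, b ω ^ 2 ∂P = 1) :
    A ^ 2 ≤ Var[fun ω => (A * a ω + c ω + ξ ω) * b ω; P] := by
  set W := fun ω => a ω * b ω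
  set R := fun ω => c ω * b ω + ξ ω * b ω
  have hab : IndepFun a b P := habc.comp measurable_id measurable_fst
  have hW : MemLp W 2 P := hb.mul' ha
  have hcb : MemLp (fun ω => c ω * b ω) 2 P := hb.mul' hc
  have hξb : MemLp (fun ω => ξ ω * b ω) 2 P :=
    (habξ.comp measurable_snd measurable_id).symm.memLp_two_mul hξ (hb.mono_exponent (by norm_num))
  have hR : MemLp R 2 P := hcb.add hξb
  have hEW : ∫ ω, W ω ∂P = 0 := by
    rw [hab.integral_fun_mul_eq_mul_integral ha.aestronglyMeasurable hb.aestronglyMeasurable,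
      ha0, zero_mul]
  have hVarW : Var[W; P] = 1 := by
    rw [hab.variance_mul (ha.mono_exponent (by norm_num)) (hb.mono_exponent (by norm_num)), ha0,
      ha2, hb2]
    norm_num
  have hcov : cov[W, R; P] = 0 := by
    have h1 : IndepFun a (fun ω => b ω ^ 2 * c ω) P :=
      habc.comp measurable_id (by fun_prop : Measurable fun p : ℝ × ℝ => p.1 ^ 2 * p.2)
    have h2 : IndepFun (fun ω => a ω * b ω ^ 2) ξ P :=
      habξ.comp (by fun_prop : Measurable fun p : ℝ × ℝ => p.1 * p.2 ^ 2) measurable_id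
    have hWcb : ∀ ω, W ω * (c ω * b ω) = a ω * (b ω ^ 2 * c ω) := fun ω => by ring
    have hWξb : ∀ ω, W ω * (ξ ω * b ω) = a ω * b ω ^ 2 * ξ ω := fun ω => by ring
    have hint1 : Integrable (fun ω => a ω * (b ω ^ 2 * c ω)) P := by
      simpa only [Pi.mul_def, hWcb] using hW.integrable_mul hcb
    have hint2 : Integrable (fun ω => a ω * b ω ^ 2 * ξ ω) P := by
      simpa only [Pi.mul_def, hWξb] using hW.integrable_mul hξb
    rw [covariance_eq_sub hW hR, hEW, zero_mul, sub_zero]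
    simp only [Pi.mul_apply, R, mul_add, hWcb, hWξb]
    rw [integral_add hint1 hint2,
      h1.integral_fun_mul_eq_mul_integral ha.aestronglyMeasurable
        ((hb.aestronglyMeasurable.pow 2).mul hc.aestronglyMeasurable),
      h2.integral_fun_mul_eq_mul_integral
        (ha.aestronglyMeasurable.mul (hb.aestronglyMeasurable.pow 2)) hξ.aestronglyMeasurable,
      ha0, hξ0, zero_mul, mul_zero, add_zero]
  refine (sq_le_variance_const_mul_add A hW hR hVarW hcov).trans_eq (congr_arg (variance · P) ?_)
  funext ω
  simp only [W, R]
  ring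

end Variance

section StdGaussian

variable {Ω E : Type*} [MeasurableSpace Ω] {P : Measure Ω}
  [NormedAddCommGroup E] [InnerProductSpace ℝ E] [FiniteDimensional ℝ E]
  [MeasurableSpace E] [BorelSpace E] {Z : Ω → E}

lemma memLp_inner_of_hasLaw_stdGaussian (hZ : HasLaw Z (stdGaussian E) P) (x : E) {p : ℝ≥0∞}
    (hp : p ≠ ∞) : MemLp (fun ω => ⟪x, Z ω⟫) p P :=
  (hZ.hasGaussianLaw.map_fun (innerSL ℝ x)).memLp hp

lemma integral_inner_of_hasLaw_stdGaussian (hZ : HasLaw Z (stdGaussian E) P) (x : E) :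
    ∫ ω, ⟪x, Z ω⟫ ∂P = 0 := by
  have h := hZ.integral_comp (f := fun y => ⟪x, y⟫) (by fun_prop)
  simp only [Function.comp_def] at h
  rw [h]
  exact integral_strongDual_stdGaussian (innerSL ℝ x)

lemma covariance_inner_of_hasLaw_stdGaussian (hZ : HasLaw Z (stdGaussian E) P) (x y : E) :
    cov[fun ω => ⟪x, Z ω⟫, fun ω => ⟪y, Z ω⟫; P] = ⟪x, y⟫ := by
  have h := hZ.covariance_comp (f := fun u => ⟪x, u⟫) (g := fun u => ⟪y, u⟫)
    (by fun_prop) (by fun_prop)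
  simp only [Function.comp_def] at h
  rw [h, ← covarianceBilin_apply_eq_cov IsGaussian.memLp_two_id, covarianceBilin_stdGaussian]
  rfl

lemma integral_inner_sq_of_hasLaw_stdGaussian (hZ : HasLaw Z (stdGaussian E) P) (x : E) :
    ∫ ω, ⟪x, Z ω⟫ ^ 2 ∂P = ‖x‖ ^ 2 := by
  have := hZ.hasGaussianLaw.isProbabilityMeasure
  have hx := memLp_inner_of_hasLaw_stdGaussian hZ x (p := 2) (by norm_num)
  have h := covariance_inner_of_hasLaw_stdGaussian hZ x x
  rw [covariance_self hx.aemeasurable, variance_eq_sub hx] at h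
  simpa [integral_inner_of_hasLaw_stdGaussian hZ, real_inner_self_eq_norm_sq] using h

lemma indepFun_inner_sub_of_hasLaw_stdGaussian (hZ : HasLaw Z (stdGaussian E) P) {u : E}
    (hu : ‖u‖ = 1) : IndepFun (fun ω => ⟪u, Z ω⟫) (fun ω => Z ω - ⟪u, Z ω⟫ • u) P := by
  let L : E →L[ℝ] ℝ × E :=
    (innerSL ℝ u).prod (ContinuousLinearMap.id ℝ E - (innerSL ℝ u).smulRight u)
  refine (hZ.hasGaussianLaw.map_fun L).indepFun_of_covariance_inner fun x y => ?_
  calc _ = cov[fun ω => ⟪x • u, Z ω⟫, fun ω => ⟪y - ⟪u, y⟫ • u, Z ω⟫; P] := by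
        congr 1 <;> funext ω
        · simp [inner_smul_left, mul_comm]
        · simp [inner_sub_left, inner_sub_right, inner_smul_left, inner_smul_right,
            real_inner_comm]
          ring
    _ = 0 := by
        rw [covariance_inner_of_hasLaw_stdGaussian hZ, inner_smul_left, inner_sub_right,
          inner_smul_right, real_inner_self_eq_norm_sq, hu]
        simp

lemma indepFun_inner_prod_of_hasLaw_stdGaussian (hZ : HasLaw Z (stdGaussian E) P) {u v w : E}
    (hu : ‖u‖ = 1) (hv : ⟪v, u⟫ = 0) (hw : ⟪w, u⟫ = 0) :
    IndepFun (fun ω => ⟪u, Z ω⟫) (fun ω => (⟪v, Z ω⟫, ⟪w, Z ω⟫)) P := by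
  have h := (indepFun_inner_sub_of_hasLaw_stdGaussian hZ hu).comp measurable_id
    (by fun_prop : Measurable fun y : E => (⟪v, y⟫, ⟪w, y⟫))
  simpa [Function.comp_def, inner_sub_right, inner_smul_right, hv, hw] using h

end StdGaussian

lemma dot_eq_inner {n : ℕ} (x y : Fin n → ℝ) :
    dot x y = ⟪WithLp.toLp 2 x, WithLp.toLp 2 y⟫ := by
  simp [dot, PiLp.inner_apply, mul_comm]

lemma hasLaw_toLp_of_map_eq_stdGaussianPi {Ω : Type*} [MeasurableSpace Ω] {P : Measure Ω} {n : ℕ}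
    {z : Ω → Fin n → ℝ} (hz : Measurable z) (hlaw : P.map z = stdGaussianPi n) :
    HasLaw (fun ω => WithLp.toLp 2 (z ω)) (stdGaussian (EuclideanSpace ℝ (Fin n))) P where
  aemeasurable := by fun_prop
  map_eq := by
    rw [← map_pi_eq_stdGaussian, ← stdGaussianPi, ← hlaw, Measure.map_map (by fun_prop) hz]
    rfl

theorem stmt1_general {n : ℕ} {Ω : Type*} [MeasurableSpace Ω]
    (P : Measure Ω) [IsProbabilityMeasure P]
    (z : Ω → Fin n → ℝ) (ξ : Ω → ℝ)
    (hz : Measurable z)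
    (hlaw : Measure.map z P = stdGaussianPi n)
    (hindep : IndepFun z ξ P)
    (hξ2 : MemLp ξ 2 P) (hξmean : ∫ ω, ξ ω ∂P = 0)
    (A : ℝ) (es gm v g : Fin n → ℝ)
    (hes : dot es es = 1) (hgm : dot gm es = 0)
    (hv : dot v v = 1) (hve : dot v es = 0)
    (hg : g = A • es + gm) :
    A ^ 2 ≤ variance (fun ω => dot v ((dot g (z ω) + ξ ω) • z ω)) P := by
  have hZ := hasLaw_toLp_of_map_eq_stdGaussianPi hz hlaw
  have hnorm : ∀ x : Fin n → ℝ, dot x x = 1 → ‖WithLp.toLp 2 x‖ = 1 := fun x hx => by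
    rw [← pow_eq_one_iff_of_nonneg (norm_nonneg _) two_ne_zero, ← real_inner_self_eq_norm_sq,
      ← dot_eq_inner, hx]
  have hmem : ∀ x, MemLp (fun ω => dot x (z ω)) 4 P := fun x => by
    simpa only [dot_eq_inner] using memLp_inner_of_hasLaw_stdGaussian hZ _ (p := 4) (by norm_num)
  have hsq : ∀ x, dot x x = 1 → ∫ ω, dot x (z ω) ^ 2 ∂P = 1 := fun x hx => by
    simp only [dot_eq_inner]
    rw [integral_inner_sq_of_hasLaw_stdGaussian hZ, hnorm x hx, one_pow]
  refine (sq_le_variance_mul_of_indepFun A ?_ ?_ (hmem es) (hmem v) (hmem gm) hξ2 ?_ hξmean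
    (hsq es hes) (hsq v hv)).trans_eq ?_
  · simpa only [dot_eq_inner] using indepFun_inner_prod_of_hasLaw_stdGaussian hZ (hnorm es hes)
      (by rwa [← dot_eq_inner]) (by rwa [← dot_eq_inner])
  · exact hindep.comp (by unfold dot; fun_prop : Measurable fun x => (dot es x, dot v x))
      measurable_id
  · simpa only [dot_eq_inner] using integral_inner_of_hasLaw_stdGaussian hZ _
  · congr 1; funext ω
    simp only [hg, dot_eq_inner]
    simp [inner_add_left, inner_smul_left, inner_smul_right]

/-- The shortcut signal injects variance at least `A²` into orthogonal directions. -/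
theorem stmt1 {n : ℕ} {Ω : Type*} [MeasurableSpace Ω]
    (P : Measure Ω) [IsProbabilityMeasure P]
    (z : Ω → Fin n → ℝ) (ξ : Ω → ℝ)
    (hz : Measurable z) (hξ : Measurable ξ)
    (hlaw : Measure.map z P = stdGaussianPi n)
    (hindep : IndepFun z ξ P)
    (hξ2 : MemLp ξ 2 P) (hξmean : ∫ ω, ξ ω ∂P = 0)
    (A : ℝ) (es gm v g : Fin n → ℝ)
    (hes : dot es es = 1) (hgm : dot gm es = 0)
    (hv : dot v v = 1) (hve : dot v es = 0)
    (hg : g = A • es + gm) :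
    A ^ 2 ≤ variance (fun ω => dot v ((dot g (z ω) + ξ ω) • z ω)) P :=
  stmt1_general P z ξ hz hlaw hindep hξ2 hξmean A es gm v g hes hgm hv hve hg
end

section
/- Fix the softmax probability simplex shortcut: let o ∈ R^C be a logit vector with at least two distinct entries, and for c > 0 define p(c·o) = softmax(c·o) and H(c) = −Σ_k p_k(c·o) log p_k(c·o). Then H is strictly decreasing in c on (0, ∞); in particular, entropy can be reduced arbitrarily by logit-norm inflation without changing the argmax prediction. -/
/-- Softmax over `Fin C`. -/
noncomputable def softmaxC {C : ℕ} (x : Fin C → ℝ) (k : Fin C) : ℝ :=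
  Real.exp (x k) / ∑ j, Real.exp (x j)

/-- Shannon entropy of a probability vector. -/
noncomputable def entropyC {C : ℕ} (q : Fin C → ℝ) : ℝ :=
  -∑ k, q k * Real.log (q k)

/-! Let `p = softmax (a • o)` and `q = softmax (b • o)` with `0 < a < b`. Since `log p` and `log q`
are affine in `o`, both entropies and both Kullback–Leibler divergences are affine in the means
`E p = ∑ p k * o k`, `E q` and the log-partition functions, and one finds
`H p - H q = KL(q ‖ p) + a (E q - E p)` and `KL(p ‖ q) + KL(q ‖ p) = (b - a) (E q - E p)`.
Gibbs' inequality makes the second identity give `E p ≤ E q`, and the first then gives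
`H q < H p`, strictly because `p ≠ q` when `o` is not constant. -/

open Finset Real

theorem sub_le_mul_log_sub_log {p q : ℝ} (hp : 0 < p) (hq : 0 < q) :
    q - p ≤ q * (log q - log p) := by
  have h := mul_le_mul_of_nonneg_left (log_le_sub_one_of_pos (div_pos hp hq)) hq.le
  rw [log_div hp.ne' hq.ne', mul_sub, mul_sub, mul_div_cancel₀ _ hq.ne', mul_one] at h
  linarith

theorem sub_lt_mul_log_sub_log {p q : ℝ} (hp : 0 < p) (hq : 0 < q) (hne : p ≠ q) :
    q - p < q * (log q - log p) := by
  have hne' : p / q ≠ 1 := by rwa [Ne, div_eq_one_iff_eq hq.ne']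
  have h := mul_lt_mul_of_pos_left (log_lt_sub_one_of_pos (div_pos hp hq) hne') hq
  rw [log_div hp.ne' hq.ne', mul_sub, mul_sub, mul_div_cancel₀ _ hq.ne', mul_one] at h
  linarith

theorem sum_mul_log_sub_log_pos {ι : Type*} [Fintype ι] {p q : ι → ℝ}
    (hp : ∀ k, 0 < p k) (hq : ∀ k, 0 < q k) (hsum : ∑ k, p k = ∑ k, q k) (hne : p ≠ q) :
    0 < ∑ k, q k * (log (q k) - log (p k)) := by
  obtain ⟨i, hi⟩ := Function.ne_iff.mp hne
  calc 0 = ∑ k, (q k - p k) := by rw [sum_sub_distrib, hsum, sub_self]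
    _ < ∑ k, q k * (log (q k) - log (p k)) :=
      sum_lt_sum (fun k _ => sub_le_mul_log_sub_log (hp k) (hq k))
        ⟨i, mem_univ i, sub_lt_mul_log_sub_log (hp i) (hq i) hi⟩

theorem sum_mul_log_sub_log_nonneg {ι : Type*} [Fintype ι] {p q : ι → ℝ}
    (hp : ∀ k, 0 < p k) (hq : ∀ k, 0 < q k) (hsum : ∑ k, p k = ∑ k, q k) :
    0 ≤ ∑ k, q k * (log (q k) - log (p k)) := by
  rcases eq_or_ne p q with rfl | hne
  · simp
  · exact (sum_mul_log_sub_log_pos hp hq hsum hne).le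

section Softmax

variable {C : ℕ}

noncomputable def logSumExp (x : Fin C → ℝ) : ℝ := log (∑ j, exp (x j))

theorem sum_exp_pos [Nonempty (Fin C)] (x : Fin C → ℝ) : 0 < ∑ j, exp (x j) :=
  sum_pos (fun _ _ => exp_pos _) univ_nonempty

theorem softmaxC_pos [Nonempty (Fin C)] (x : Fin C → ℝ) (k : Fin C) : 0 < softmaxC x k :=
  div_pos (exp_pos _) (sum_exp_pos x)

theorem sum_softmaxC [Nonempty (Fin C)] (x : Fin C → ℝ) : ∑ k, softmaxC x k = 1 := by
  simp only [softmaxC, ← sum_div, div_self (sum_exp_pos x).ne']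

theorem log_softmaxC [Nonempty (Fin C)] (x : Fin C → ℝ) (k : Fin C) :
    log (softmaxC x k) = x k - logSumExp x := by
  rw [softmaxC, log_div (exp_ne_zero _) (sum_exp_pos x).ne', log_exp, logSumExp]

theorem softmaxC_le_softmaxC_iff (x : Fin C → ℝ) (j k : Fin C) :
    softmaxC x j ≤ softmaxC x k ↔ x j ≤ x k := by
  have : Nonempty (Fin C) := ⟨j⟩
  rw [softmaxC, softmaxC, div_le_div_iff_of_pos_right (sum_exp_pos x), exp_le_exp]

theorem sum_softmaxC_mul_log_softmaxC [Nonempty (Fin C)] (x y : Fin C → ℝ) :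
    ∑ k, softmaxC y k * log (softmaxC x k) = ∑ k, softmaxC y k * x k - logSumExp x := by
  simp only [log_softmaxC, mul_sub, sum_sub_distrib, ← sum_mul, sum_softmaxC, one_mul]

theorem entropyC_softmaxC [Nonempty (Fin C)] (x : Fin C → ℝ) :
    entropyC (softmaxC x) = logSumExp x - ∑ k, softmaxC x k * x k := by
  rw [entropyC, sum_softmaxC_mul_log_softmaxC, neg_sub]

theorem sum_softmaxC_mul_log_sub_log [Nonempty (Fin C)] (x y : Fin C → ℝ) :
    ∑ k, softmaxC y k * (log (softmaxC y k) - log (softmaxC x k)) =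
      ∑ k, softmaxC y k * y k - ∑ k, softmaxC y k * x k - logSumExp y + logSumExp x := by
  simp only [mul_sub, sum_sub_distrib, sum_softmaxC_mul_log_softmaxC]
  ring

theorem sum_mul_smul_apply (w o : Fin C → ℝ) (c : ℝ) :
    ∑ k, w k * (c • o) k = c * ∑ k, w k * o k := by
  simp only [Pi.smul_apply, smul_eq_mul, mul_sum, mul_left_comm]

theorem softmaxC_smul_ne {o : Fin C → ℝ} (ho : ∃ i j, o i ≠ o j) {a b : ℝ} (hab : a ≠ b) :
    softmaxC (a • o) ≠ softmaxC (b • o) := by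
  obtain ⟨i, j, hij⟩ := ho
  have : Nonempty (Fin C) := ⟨i⟩
  intro h
  have hlog : ∀ k, a * o k - logSumExp (a • o) = b * o k - logSumExp (b • o) := fun k => by
    simpa only [log_softmaxC, Pi.smul_apply, smul_eq_mul] using congrArg (fun p => log (p k)) h
  have : (a - b) * (o i - o j) = 0 := by linarith [hlog i, hlog j]
  rcases mul_eq_zero.mp this with h | h
  · exact hab (sub_eq_zero.mp h)
  · exact hij (sub_eq_zero.mp h)

variable [Nonempty (Fin C)]

theorem sum_softmaxC_smul_mul_mono (o : Fin C → ℝ) {a b : ℝ} (hab : a ≤ b) :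
    ∑ k, softmaxC (a • o) k * o k ≤ ∑ k, softmaxC (b • o) k * o k := by
  rcases hab.eq_or_lt with rfl | hlt
  · rfl
  have hpq := sum_mul_log_sub_log_nonneg (softmaxC_pos (b • o)) (softmaxC_pos (a • o))
    (by rw [sum_softmaxC, sum_softmaxC])
  have hqp := sum_mul_log_sub_log_nonneg (softmaxC_pos (a • o)) (softmaxC_pos (b • o))
    (by rw [sum_softmaxC, sum_softmaxC])
  rw [sum_softmaxC_mul_log_sub_log, sum_mul_smul_apply, sum_mul_smul_apply] at hpq hqp
  have key : 0 ≤ (b - a) * (∑ k, softmaxC (b • o) k * o k - ∑ k, softmaxC (a • o) k * o k) := by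
    linarith
  exact sub_nonneg.mp (nonneg_of_mul_nonneg_right key (sub_pos.mpr hlt))

theorem entropyC_softmaxC_smul_lt {o : Fin C → ℝ} (ho : ∃ i j, o i ≠ o j) {a b : ℝ}
    (ha : 0 < a) (hab : a < b) :
    entropyC (softmaxC (b • o)) < entropyC (softmaxC (a • o)) := by
  have hkl := sum_mul_log_sub_log_pos (softmaxC_pos (a • o)) (softmaxC_pos (b • o))
    (by rw [sum_softmaxC, sum_softmaxC]) (softmaxC_smul_ne ho hab.ne)
  have hmono := sum_softmaxC_smul_mul_mono o hab.le
  rw [sum_softmaxC_mul_log_sub_log, sum_mul_smul_apply, sum_mul_smul_apply] at hkl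
  rw [entropyC_softmaxC, entropyC_softmaxC, sum_mul_smul_apply, sum_mul_smul_apply]
  linarith [mul_nonneg ha.le (sub_nonneg.mpr hmono)]

end Softmax

/-- For a non-constant logit vector `o`, the entropy of `softmax(c·o)` is strictly
decreasing in `c > 0`, while the ordering of the softmax probabilities (hence the
argmax prediction) is unchanged. -/
theorem stmt7 {C : ℕ} (o : Fin C → ℝ) (hne : ∃ i j, o i ≠ o j) :
    StrictAntiOn (fun c : ℝ => entropyC (softmaxC (c • o))) (Set.Ioi 0) ∧
    ∀ c ∈ Set.Ioi (0:ℝ), ∀ k j, (softmaxC (c • o) j ≤ softmaxC (c • o) k ↔ o j ≤ o k) := by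
  have : Nonempty (Fin C) := ⟨hne.choose⟩
  refine ⟨fun a ha b _ hab => entropyC_softmaxC_smul_lt hne ha hab, fun c hc k j => ?_⟩
  rw [softmaxC_le_softmaxC_iff, Pi.smul_apply, Pi.smul_apply, smul_eq_mul, smul_eq_mul,
    mul_le_mul_iff_right₀ hc]
end
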